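/- For all 1 ≤ i, j, j' ≤ m, all 1 ≤ r ≤ p, all 1 ≤ a, b ≤ d', and all integers k, l ≥ 0, the commutator in End_ℂ(P) satisfies ⁅G_a(i,j;k), H_b(r,j';l)⁆ = −δ_{a,b}·δ_{i,j'}·H_a(r,j;k+l). (This is part of the homomorphism property established in Proposition 4.2 of the paper, corresponding to the Takiff relation [E^{p+q+i}_{p+q+j} ⊗ t̄_{w_a}^k, E^r_{p+q+j'} ⊗ t̄_{w_b}^l] = −δ_{a,b} δ_{i,j'} E^r_{p+q+j} ⊗ t̄_{w_a}^{k+l} in the purely even case.) -/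
import Mathlib


open MvPolynomial

/-- Multiplication by the variable `v`, as a `ℂ`-linear endomorphism of the
polynomial ring. -/
noncomputable def mulOp {σ : Type*} (v : σ) :
    Module.End ℂ (MvPolynomial σ ℂ) :=
  LinearMap.mulLeft ℂ (X v)

/-- The partial derivative with respect to the variable `v`, as a `ℂ`-linear endomorphism
of the polynomial ring. -/
noncomputable def derOp {σ : Type*} (v : σ) :
    Module.End ℂ (MvPolynomial σ ℂ) :=
  (pderiv v).toLinearMap

/-- The variable `y^α_r` of the Fock space `MvPolynomial (Fin d × (Fin p ⊕ Fin m)) ℂ`,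
with superscript index `α` (0-based, a natural number) and subscript `r : Fin p`. -/
def yvar (d p m : ℕ) (α : ℕ) (h : α < d) (r : Fin p) : Fin d × (Fin p ⊕ Fin m) :=
  (⟨α, h⟩, Sum.inl r)

/-- The variable `x^α_i`, with superscript index `α` (0-based) and subscript `i : Fin m`. -/
def xvar (d p m : ℕ) (α : ℕ) (h : α < d) (i : Fin m) : Fin d × (Fin p ⊕ Fin m) :=
  (⟨α, h⟩, Sum.inr i)

/-- `F_a(r,s;k) = -Σ_{α=D+1}^{D+ξ-k} ∂_{y^{α+k}_r} ∘ y^α_s`, where `D = d_a`, `ξ = ξ_a`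
(the superscripts are written 0-based, so `α` runs over `D, D+1, …, D+ξ-k-1`). -/
noncomputable def Fop (d p m : ℕ) (D ξ : ℕ) (r s : Fin p) (k : ℕ) :
    Module.End ℂ (MvPolynomial (Fin d × (Fin p ⊕ Fin m)) ℂ) :=
  - ∑ α ∈ Finset.range (ξ - k),
      if h : D + α + k < d then
        derOp (yvar d p m (D + α + k) h r) * mulOp (yvar d p m (D + α) (by omega) s)
      else 0

/-- `H_a(r,j;k) = Σ_{α=D+1}^{D+ξ-k} ∂_{y^{α+k}_r} ∘ ∂_{x^α_j}`, where `D = d_a`,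
`ξ = ξ_a`. -/
noncomputable def Hop (d p m : ℕ) (D ξ : ℕ) (r : Fin p) (j : Fin m) (k : ℕ) :
    Module.End ℂ (MvPolynomial (Fin d × (Fin p ⊕ Fin m)) ℂ) :=
  ∑ α ∈ Finset.range (ξ - k),
      if h : D + α + k < d then
        derOp (yvar d p m (D + α + k) h r) * derOp (xvar d p m (D + α) (by omega) j)
      else 0

/-- `K_a(i,s;k) = -Σ_{α=D+1}^{D+ξ-k} x^{α+k}_i ∘ y^α_s`, where `D = d_a`, `ξ = ξ_a`. -/
noncomputable def Kop (d p m : ℕ) (D ξ : ℕ) (i : Fin m) (s : Fin p) (k : ℕ) :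
    Module.End ℂ (MvPolynomial (Fin d × (Fin p ⊕ Fin m)) ℂ) :=
  - ∑ α ∈ Finset.range (ξ - k),
      if h : D + α + k < d then
        mulOp (xvar d p m (D + α + k) h i) * mulOp (yvar d p m (D + α) (by omega) s)
      else 0

/-- `G_a(i,j;k) = Σ_{α=D+1}^{D+ξ-k} x^{α+k}_i ∘ ∂_{x^α_j}`, where `D = d_a`, `ξ = ξ_a`. -/
noncomputable def Gop (d p m : ℕ) (D ξ : ℕ) (i j : Fin m) (k : ℕ) :
    Module.End ℂ (MvPolynomial (Fin d × (Fin p ⊕ Fin m)) ℂ) :=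
  ∑ α ∈ Finset.range (ξ - k),
      if h : D + α + k < d then
        mulOp (xvar d p m (D + α + k) h i) * derOp (xvar d p m (D + α) (by omega) j)
      else 0

/- ==== auxiliary lemmas ==== -/

lemma aux_comm_helper {R : Type*} [Ring R] (U V W Z c : R)
    (h1 : Z * U = U * Z + c) (h2 : W * U = U * W)
    (h3 : V * W = W * V) (h4 : V * Z = Z * V) :
    (U * V) * (W * Z) - (W * Z) * (U * V) = - (W * c * V) := by
  have key : (W * Z) * (U * V) = (U * V) * (W * Z) + W * c * V := by
    calc (W * Z) * (U * V) = W * (Z * U) * V := by noncomm_ring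
      _ = W * (U * Z + c) * V := by rw [h1]
      _ = (W * U) * (Z * V) + W * c * V := by noncomm_ring
      _ = (U * W) * (V * Z) + W * c * V := by rw [h2, h4]
      _ = U * (W * V) * Z + W * c * V := by noncomm_ring
      _ = U * (V * W) * Z + W * c * V := by rw [h3]
      _ = (U * V) * (W * Z) + W * c * V := by noncomm_ring
  rw [key]; abel

lemma aux_der_der {σ : Type*} [DecidableEq σ] (v w : σ) :
    (derOp v : Module.End ℂ (MvPolynomial σ ℂ)) * derOp w = derOp w * derOp v := by
  apply LinearMap.ext
  intro f
  simp only [derOp, Module.End.mul_apply, Derivation.coeFn_coe]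
  induction f using MvPolynomial.induction_on with
  | C a => simp [pderiv_C]
  | add f g hf hg => simp [hf, hg]
  | mul_X f s hf =>
      simp only [pderiv_mul, map_add, pderiv_mul, hf, pderiv_X, Pi.single_apply]
      split_ifs <;> (try simp) <;> ring

lemma aux_der_mul {σ : Type*} [DecidableEq σ] (v w : σ) :
    (derOp v : Module.End ℂ (MvPolynomial σ ℂ)) * mulOp w
      = mulOp w * derOp v + (if v = w then 1 else 0) := by
  apply LinearMap.ext
  intro f
  simp only [derOp, mulOp, Module.End.mul_apply, LinearMap.add_apply, Derivation.coeFn_coe,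
    LinearMap.mulLeft_apply, pderiv_mul, pderiv_X, Pi.single_apply]
  split_ifs <;> simp_all [add_comm, mul_comm]

lemma aux_term_comm {σ : Type*} [DecidableEq σ] (u v w z : σ) (hwu : w ≠ u) :
    (mulOp u * derOp v) * (derOp w * derOp z)
      - (derOp w * derOp z) * (mulOp u * derOp v)
    = - (if z = u then (derOp w * derOp v : Module.End ℂ (MvPolynomial σ ℂ)) else 0) := by
  have h2 : (derOp w : Module.End ℂ (MvPolynomial σ ℂ)) * mulOp u = mulOp u * derOp w := by
    rw [aux_der_mul, if_neg hwu, add_zero]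
  have := aux_comm_helper (mulOp u) (derOp v) (derOp w) (derOp z)
    ((if z = u then 1 else 0 : Module.End ℂ (MvPolynomial σ ℂ)))
    (aux_der_mul z u) h2 (aux_der_der v w) (aux_der_der v z)
  rw [this]
  congr 1
  split_ifs <;> simp

/-- `⁅G_a(i,j;k), H_b(r,j';l)⁆ = -δ_{ab} δ_{i j'} H_a(r,j;k+l)`. -/
theorem stmt13 (p m : ℕ) (hpm : 1 ≤ p + m) (d' : ℕ) (hd' : 1 ≤ d')
    (ξ : Fin d' → ℕ) (hξ : ∀ a, 0 < ξ a) (d : ℕ) (hd : d = ∑ a, ξ a)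
    (D : Fin d' → ℕ)
    (hD : ∀ a, D a = ∑ b ∈ Finset.univ.filter (fun b => b < a), ξ b)
    (a b : Fin d') (i j j' : Fin m) (r : Fin p) (k l : ℕ) :
    Gop d p m (D a) (ξ a) i j k * Hop d p m (D b) (ξ b) r j' l
      - Hop d p m (D b) (ξ b) r j' l * Gop d p m (D a) (ξ a) i j k
    = - (if a = b then
          (if i = j' then Hop d p m (D a) (ξ a) r j (k + l) else 0)
        else 0) := by
  classical
  have hDle : ∀ c : Fin d', D c + ξ c ≤ d := by
    intro c
    rw [hD, hd]
    have h1 : (∑ b ∈ Finset.univ.filter (fun b => b < c), ξ b) + ξ c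
        = ∑ b ∈ insert c (Finset.univ.filter (fun b => b < c)), ξ b := by
      rw [Finset.sum_insert (by simp)]; ring
    rw [h1]
    exact Finset.sum_le_sum_of_subset (Finset.subset_univ _)
  have hmono : ∀ c e : Fin d', c < e → D c + ξ c ≤ D e := by
    intro c e hce
    rw [hD, hD]
    have h1 : (∑ b ∈ Finset.univ.filter (fun b => b < c), ξ b) + ξ c
        = ∑ b ∈ insert c (Finset.univ.filter (fun b => b < c)), ξ b := by
      rw [Finset.sum_insert (by simp)]; ring
    rw [h1]
    apply Finset.sum_le_sum_of_subset
    intro x hx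
    simp only [Finset.mem_insert, Finset.mem_filter, Finset.mem_univ, true_and] at hx ⊢
    rcases hx with rfl | hx
    · exact hce
    · exact hx.trans hce
  have hdisj : ∀ (c e : Fin d') (s t : ℕ), s < ξ c → t < ξ e → D c + s = D e + t → c = e := by
    intro c e s t hs ht heq
    rcases lt_trichotomy c e with h | h | h
    · have := hmono c e h; omega
    · exact h
    · have := hmono e c h; omega
  rw [Gop, Hop, Finset.sum_mul_sum, Finset.sum_mul_sum, Finset.sum_comm]
  simp only [← Finset.sum_sub_distrib]
  trans (∑ β ∈ Finset.range (ξ b - l), ∑ α ∈ Finset.range (ξ a - k),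
      if a = b ∧ i = j' ∧ β = α + k then
        -(if h : D a + α + (k + l) < d then
            derOp (yvar d p m (D a + α + (k + l)) h r) *
              derOp (xvar d p m (D a + α) (by omega) j)
          else 0)
      else 0)
  · refine Finset.sum_congr rfl fun β hβ => Finset.sum_congr rfl fun α hα => ?_
    rw [Finset.mem_range] at hβ hα
    have hαd : D a + α + k < d := by have := hDle a; omega
    have hβd : D b + β + l < d := by have := hDle b; omega
    rw [dif_pos hαd, dif_pos hβd]
    rw [aux_term_comm _ _ _ _ (by simp [yvar, xvar])]
    have hzu : (xvar d p m (D b + β) (by omega) j' : Fin d × (Fin p ⊕ Fin m))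
        = xvar d p m (D a + α + k) hαd i ↔ (D b + β = D a + α + k ∧ j' = i) := by
      simp [xvar, Prod.ext_iff, Fin.ext_iff]
    by_cases hc : D b + β = D a + α + k ∧ j' = i
    · have hba : b = a := hdisj b a β (α + k) (by omega) (by omega) (by omega)
      subst hba
      have hβα : β = α + k := by omega
      rw [if_pos (hzu.mpr hc), if_pos ⟨rfl, hc.2.symm, hβα⟩]
      have hdd : D b + α + (k + l) < d := by omega
      rw [dif_pos hdd]
      have hy : yvar d p m (D b + β + l) hβd r = yvar d p m (D b + α + (k + l)) hdd r := by
        have hnum : D b + β + l = D b + α + (k + l) := by omega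
        simp [yvar, hnum]
      rw [hy]
    · rw [if_neg (fun h => hc (hzu.mp h)), if_neg (by
        rintro ⟨rfl, rfl, rfl⟩
        exact hc ⟨by omega, rfl⟩)]
      simp
  · by_cases hab : a = b
    · subst hab
      by_cases hij : i = j'
      · subst hij
        simp only [eq_self_iff_true, if_true, true_and]
        rw [Finset.sum_comm]
        trans (∑ α ∈ Finset.range (ξ a - k),
          if α + k ∈ Finset.range (ξ a - l) then
            -(if h : D a + α + (k + l) < d then
                derOp (yvar d p m (D a + α + (k + l)) h r) *
                  derOp (xvar d p m (D a + α) (by omega) j)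
              else 0) else 0)
        · exact Finset.sum_congr rfl fun α _ => Finset.sum_ite_eq' _ _ _
        · trans (∑ α ∈ Finset.range (ξ a - (k + l)),
            if α + k ∈ Finset.range (ξ a - l) then
              -(if h : D a + α + (k + l) < d then
                  derOp (yvar d p m (D a + α + (k + l)) h r) *
                    derOp (xvar d p m (D a + α) (by omega) j)
                else 0) else 0)
          · exact (Finset.sum_subset (Finset.range_subset_range.mpr (by omega))
              (fun x hx hnx => if_neg (by
                simp only [Finset.mem_range] at hx hnx ⊢; omega))).symm
          · rw [Hop, ← Finset.sum_neg_distrib]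
            refine Finset.sum_congr rfl fun α hα => ?_
            rw [Finset.mem_range] at hα
            rw [if_pos (by simp only [Finset.mem_range]; omega)]
      · rw [Finset.sum_eq_zero fun β _ => Finset.sum_eq_zero fun α _ =>
            if_neg (fun hcond => hij hcond.2.1), if_neg hij]
        simp
    · rw [Finset.sum_eq_zero fun β _ => Finset.sum_eq_zero fun α _ =>
            if_neg (fun hcond => hab hcond.1), if_neg hab]
      simp
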